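/- arXiv:2211.04207 — 3 statements merged into one kernel-verified Lean document; each statement's English description precedes it below -/
import Mathlib

section
/- Let Ω be a bounded open subset of ℝⁿ and let μ and ν be probability measures on ℝⁿ supported in Ω, each absolutely continuous with respect to Lebesgue measure with bounded density. Then there exists a convex function φ : ℝⁿ → ℝ, differentiable on a Borel set of full μ-measure, such that: (i) the pushforward of μ under the map x ↦ ∇φ(x) equals ν; (ii) the map ∇φ minimizes the Monge cost M(T) = ∫ |x − T(x)|² dμ(x) among all Borel measurable maps T : ℝⁿ → ℝⁿ with T_#μ = ν; and (iii) any Borel measurable map T with T_#μ = ν achieving the minimal cost satisfies T(x) = ∇φ(x) for μ-almost every x. -/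
/-!
Since `‖x - y‖² = ‖x‖² + ‖y‖² - 2⟪x, y⟫`, minimizing the Monge cost means maximizing
`∫ ⟪x, T x⟫ dμ`; the dual problem minimizes `∫ φ dμ + ∫ ψ dν` over pairs with
`φ x + ψ y ≥ ⟪x, y⟫`. Let `K` be the compact closure of `Ω` and restrict to pairs `(g*, g**)` of
Legendre transforms over `K`. Replacing `g` by `g**` and normalizing it at a point does not change
the dual value and makes the candidates uniformly Lipschitz and bounded, so by Arzelà–Ascoli
there is a minimizer `f` with `f** = f`. Then `φ = f*` is convex and Lipschitz, hence
differentiable `μ`-a.e. by Rademacher's theorem, and at such a point `x` the supremum defining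
`φ x` is attained only at `∇φ x`. Perturbing `f` by `t ζ` and differentiating at `t = 0`
(Danskin's formula and dominated convergence) gives `∫ ζ ∘ ∇φ dμ = ∫ ζ dν` for all bounded
continuous `ζ`, i.e. `(∇φ)_# μ = ν`. Finally the cost of any `T` with `T_# μ = ν` is the cost of
`∇φ` plus twice the integral of the Young gap `φ x + ψ (T x) - ⟪x, T x⟫ ≥ 0`, and at a point of
differentiability this gap vanishes only if `T x = ∇φ x`.
-/

open MeasureTheory Set Filter Topology
open scoped RealInnerProductSpace BoundedContinuousFunction NNReal

theorem Bornology.IsBounded.exists_nnreal_norm_le {E : Type*} [SeminormedAddCommGroup E]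
    {s : Set E} (hs : Bornology.IsBounded s) : ∃ R : ℝ≥0, ∀ x ∈ s, ‖x‖ ≤ R := by
  obtain ⟨R, hR⟩ := hs.exists_norm_le
  exact ⟨R.toNNReal, fun x hx => (hR x hx).trans (Real.le_coe_toNNReal R)⟩

theorem isCompact_setOf_lipschitzWith_apply_eq_zero {α : Type*} [MetricSpace α]
    [CompactSpace α] (R : ℝ≥0) (a : α) : IsCompact {g : α →ᵇ ℝ | LipschitzWith R g ∧ g a = 0} := by
  set D := Metric.diam (univ : Set α)
  have hlip : IsClosed {g : α →ᵇ ℝ | LipschitzWith R g} :=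
    (isClosed_setOfPred_lipschitzWith (α := α) (β := ℝ) R).preimage
      BoundedContinuousFunction.continuous_coe
  refine BoundedContinuousFunction.arzela_ascoli₂ (Icc (-(R * D)) (R * D)) isCompact_Icc _
    (hlip.inter (isClosed_eq (continuous_eval_const a) continuous_const)) ?_ ?_
  · rintro g x ⟨hg, hga⟩
    have hgx : |g x| ≤ R * dist x a := by simpa [hga, Real.dist_eq] using hg.dist_le_mul x a
    have hxa : dist x a ≤ D :=
      Metric.dist_le_diam_of_mem isCompact_univ.isBounded (mem_univ x) (mem_univ a)
    exact abs_le.mp (hgx.trans (by gcongr))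
  · refine Metric.equicontinuous_of_continuity_modulus (fun d => R * d) ?_ _
      fun x y g => g.2.1.dist_le_mul x y
    exact (continuous_const_mul (R : ℝ)).tendsto' 0 0 (mul_zero _)

theorem integrable_of_continuous_of_measure_compl_eq_zero {X : Type*} [TopologicalSpace X]
    [T2Space X] [MeasurableSpace X] [OpensMeasurableSpace X] {μ : Measure X} [IsFiniteMeasure μ]
    {K : Set X} (hK : IsCompact K) (hμK : μ Kᶜ = 0) {u : X → ℝ} (hu : Continuous u) :
    Integrable u μ := by
  rw [← Measure.restrict_eq_self_of_ae_mem (ae_iff.mpr hμK)]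
  exact hu.continuousOn.integrableOn_compact hK

theorem integrable_comp_of_map_eq {X α : Type*} [TopologicalSpace X] [T2Space X]
    [MeasurableSpace X] [OpensMeasurableSpace X] [MeasurableSpace α] {μ : Measure α}
    [IsFiniteMeasure μ] {ν : Measure X} {K : Set X} (hK : IsCompact K) (hνK : ν Kᶜ = 0)
    {T : α → X} (hT : Measurable T) (hTμ : μ.map T = ν) {u : X → ℝ} (hu : Continuous u) :
    Integrable (fun x => u (T x)) μ := by
  subst hTμ
  exact (integrable_of_continuous_of_measure_compl_eq_zero hK hνK hu).comp_measurable hT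

theorem ae_mem_of_map_eq {α β : Type*} [MeasurableSpace α] [MeasurableSpace β] {μ : Measure α}
    {ν : Measure β} {T : α → β} (hT : AEMeasurable T μ) (hTμ : μ.map T = ν) {K : Set β}
    (hνK : ν Kᶜ = 0) : ∀ᵐ x ∂μ, T x ∈ K :=
  ae_of_ae_map hT (hTμ ▸ ae_iff.mpr hνK)

namespace Brenier

variable {F : Type*} [NormedAddCommGroup F] [InnerProductSpace ℝ F]

/-- Meaningful for compact `K` only: otherwise the supremum may be unbounded and `⨆` is junk. -/
noncomputable def legendre (K : Set F) (f : K → ℝ) (y : F) : ℝ :=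
  ⨆ q : K, (⟪(q : F), y⟫ - f q)

noncomputable def legendreOn (K : Set F) (f : K → ℝ) : K → ℝ :=
  fun q => legendre K f q

section Legendre

variable {K : Set F} {f g : K → ℝ}

theorem le_legendre [CompactSpace K] (hf : Continuous f) (q : K) (y : F) :
    ⟪(q : F), y⟫ - f q ≤ legendre K f y :=
  le_ciSup (f := fun q : K => ⟪(q : F), y⟫ - f q) (isCompact_range (by fun_prop)).bddAbove q

theorem legendre_le [Nonempty K] {y : F} {c : ℝ} (h : ∀ q : K, ⟪(q : F), y⟫ - f q ≤ c) :
    legendre K f y ≤ c :=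
  ciSup_le h

theorem exists_legendre_eq [CompactSpace K] [Nonempty K] (hf : Continuous f) (y : F) :
    ∃ q : K, legendre K f y = ⟪(q : F), y⟫ - f q := by
  have hc : Continuous fun q : K => ⟪(q : F), y⟫ - f q := by fun_prop
  obtain ⟨q, hq⟩ := hc.exists_forall_ge (by rw [cocompact_eq_bot]; exact tendsto_bot)
  exact ⟨q, (legendre_le hq).antisymm (le_legendre hf q y)⟩

theorem legendre_le_legendre_add_of_le_add [CompactSpace K] [Nonempty K] (hg : Continuous g)
    {c : ℝ} (h : ∀ q, g q ≤ f q + c) (y : F) : legendre K f y ≤ legendre K g y + c :=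
  legendre_le fun q => by linarith [le_legendre hg q y, h q]

theorem legendre_le_legendre_of_le [CompactSpace K] [Nonempty K] (hf : Continuous f)
    (h : ∀ q, f q ≤ g q) (y : F) : legendre K g y ≤ legendre K f y := by
  simpa using legendre_le_legendre_add_of_le_add hf (c := 0) (by simpa using h) y

theorem abs_legendre_sub_legendre_le [CompactSpace K] [Nonempty K] (hf : Continuous f)
    (hg : Continuous g) {c : ℝ} (h : ∀ q, |f q - g q| ≤ c) (y : F) :
    |legendre K f y - legendre K g y| ≤ c := by
  have hfg := legendre_le_legendre_add_of_le_add (f := f) hg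
    (fun q => by linarith [(abs_le.mp (h q)).1]) y
  have hgf := legendre_le_legendre_add_of_le_add (f := g) hf
    (fun q => by linarith [(abs_le.mp (h q)).2]) y
  exact abs_le.mpr ⟨by linarith, by linarith⟩

theorem legendre_add_const [CompactSpace K] [Nonempty K] (hf : Continuous f) (c : ℝ) (y : F) :
    legendre K (fun q => f q + c) y = legendre K f y - c := by
  have h₁ := legendre_le_legendre_add_of_le_add (f := fun q => f q + c) hf (c := -c)
    (fun q => by simp) y
  have h₂ := legendre_le_legendre_add_of_le_add (f := f) (g := fun q => f q + c) (by fun_prop)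
    (c := c) (fun q => le_rfl) y
  linarith

theorem lipschitzWith_legendre [CompactSpace K] [Nonempty K] (hf : Continuous f) {R : ℝ≥0}
    (hR : ∀ x ∈ K, ‖x‖ ≤ R) : LipschitzWith R (legendre K f) := by
  refine LipschitzWith.of_le_add_mul R fun x y => legendre_le fun q => ?_
  have hq : ⟪(q : F), x - y⟫ ≤ R * dist x y := by
    rw [dist_eq_norm]
    exact (real_inner_le_norm _ _).trans (by gcongr; exact hR q q.2)
  rw [inner_sub_right] at hq
  linarith [le_legendre hf q y]

theorem continuous_legendre [CompactSpace K] [Nonempty K] (hf : Continuous f) :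
    Continuous (legendre K f) := by
  obtain ⟨R, hR⟩ :=
    (isCompact_iff_compactSpace.mpr ‹CompactSpace K›).isBounded.exists_nnreal_norm_le
  exact (lipschitzWith_legendre hf hR).continuous

theorem convexOn_legendre [CompactSpace K] [Nonempty K] (hf : Continuous f) :
    ConvexOn ℝ univ (legendre K f) := by
  refine ⟨convex_univ, fun x _ y _ a b ha hb hab => ?_⟩
  obtain ⟨q, hq⟩ := exists_legendre_eq hf (a • x + b • y)
  rw [hq, inner_add_right, real_inner_smul_right, real_inner_smul_right, smul_eq_mul, smul_eq_mul]
  have hx := mul_le_mul_of_nonneg_left (le_legendre hf q x) ha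
  have hy := mul_le_mul_of_nonneg_left (le_legendre hf q y) hb
  have hfq : f q = a * f q + b * f q := by rw [← add_mul, hab, one_mul]
  linarith

theorem continuous_legendreOn [CompactSpace K] [Nonempty K] (hf : Continuous f) :
    Continuous (legendreOn K f) :=
  (continuous_legendre hf).comp continuous_subtype_val

theorem lipschitzWith_legendreOn [CompactSpace K] [Nonempty K] (hf : Continuous f) {R : ℝ≥0}
    (hR : ∀ x ∈ K, ‖x‖ ≤ R) : LipschitzWith R (legendreOn K f) := by
  have h := (lipschitzWith_legendre hf hR).comp (LipschitzWith.subtype_val K)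
  rw [mul_one] at h
  exact h

theorem legendreOn_legendreOn_le [CompactSpace K] [Nonempty K] (hf : Continuous f) (q : K) :
    legendreOn K (legendreOn K f) q ≤ f q :=
  legendre_le fun p => by
    have := le_legendre hf q p
    rw [real_inner_comm] at this
    simp only [legendreOn]
    linarith

theorem legendreOn_legendreOn_legendreOn [CompactSpace K] [Nonempty K] (hf : Continuous f) :
    legendreOn K (legendreOn K (legendreOn K f)) = legendreOn K f :=
  funext fun q => le_antisymm (legendreOn_legendreOn_le (continuous_legendreOn hf) q)
    (legendre_le_legendre_of_le (continuous_legendreOn (continuous_legendreOn hf))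
      (legendreOn_legendreOn_le hf) q)

theorem legendreOn_legendreOn_add_const [CompactSpace K] [Nonempty K] (hf : Continuous f)
    (c : ℝ) : legendreOn K (legendreOn K fun q => f q + c) =
      fun q => legendreOn K (legendreOn K f) q + c := by
  have h : legendreOn K (fun q => f q + c) = fun q => legendreOn K f q + -c :=
    funext fun q => (legendre_add_const hf c q).trans (sub_eq_add_neg _ _)
  funext q
  rw [h]
  exact (legendre_add_const (continuous_legendreOn hf) (-c) q).trans (sub_neg_eq_add _ _)

theorem abs_legendre_perturb_div_add_le [CompactSpace K] (hf : Continuous f) (ζ : F →ᵇ ℝ)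
    {x : F} {t : ℝ} (ht : t ≠ 0) {q₀ qₜ : K} (hq₀ : legendre K f x = ⟪(q₀ : F), x⟫ - f q₀)
    (hqₜ : legendre K (fun p => f p + t * ζ p) x = ⟪(qₜ : F), x⟫ - (f qₜ + t * ζ qₜ)) :
    |(legendre K (fun p => f p + t * ζ p) x - legendre K f x) / t + ζ q₀| ≤ |ζ qₜ - ζ q₀| := by
  have hlow := le_legendre (f := fun p => f p + t * ζ p) (by fun_prop) q₀ x
  have hupp := le_legendre hf qₜ x
  rw [show (legendre K (fun p => f p + t * ζ p) x - legendre K f x) / t + ζ q₀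
      = (legendre K (fun p => f p + t * ζ p) x - legendre K f x + t * ζ q₀) / t by field_simp,
    abs_div, div_le_iff₀ (abs_pos.mpr ht), abs_sub_comm, ← abs_mul]
  exact abs_le_abs_of_nonneg (by linarith) (by linarith)

noncomputable def youngGap (K : Set F) (f : K → ℝ) (x y : F) : ℝ :=
  legendre K f x + legendre K (legendreOn K f) y - ⟪x, y⟫

theorem youngGap_nonneg [CompactSpace K] (hf : Continuous f)
    (hfix : legendreOn K (legendreOn K f) = f) (x : F) {y : F} (hy : y ∈ K) :
    0 ≤ youngGap K f x y := by
  have h := le_legendre hf ⟨y, hy⟩ x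
  have hψ : legendre K (legendreOn K f) y = f ⟨y, hy⟩ := congrFun hfix ⟨y, hy⟩
  rw [youngGap, hψ, real_inner_comm]
  linarith

end Legendre

section Gradient

variable [CompleteSpace F]

theorem gradient_eq_of_forall_inner_sub_le {φ : F → ℝ} {x y : F} {c : ℝ}
    (hle : ∀ z, ⟪y, z⟫ - c ≤ φ z) (heq : φ x = ⟪y, x⟫ - c) (hd : DifferentiableAt ℝ φ x) :
    gradient φ x = y := by
  have hmin : IsLocalMin (fun z => φ z - innerSL ℝ y z) x :=
    IsMinOn.isLocalMin (fun z _ => by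
      simp only [mem_ofPred_eq, innerSL_apply_apply]
      linarith [hle z]) univ_mem
  have hzero := hmin.hasFDerivAt_eq_zero (hd.hasFDerivAt.sub (innerSL ℝ y).hasFDerivAt)
  rw [gradient, sub_eq_zero.mp hzero]
  exact (InnerProductSpace.toDual ℝ F).symm_apply_apply y

variable {K : Set F} {f : K → ℝ}

theorem gradient_legendre_eq [CompactSpace K] (hf : Continuous f) {x : F}
    (hd : DifferentiableAt ℝ (legendre K f) x) {q : K}
    (hq : legendre K f x = ⟪(q : F), x⟫ - f q) :
    gradient (legendre K f) x = q :=
  gradient_eq_of_forall_inner_sub_le (le_legendre hf q) hq hd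

theorem exists_lt_legendre_of_le_dist [CompactSpace K] (hf : Continuous f) {x : F}
    (hd : DifferentiableAt ℝ (legendre K f) x) {q₀ : K}
    (hq₀ : legendre K f x = ⟪(q₀ : F), x⟫ - f q₀) {δ : ℝ} (hδ : 0 < δ) :
    ∃ m < legendre K f x, ∀ p : K, δ ≤ dist p q₀ → ⟪(p : F), x⟫ - f p ≤ m := by
  set S : Set K := {p | δ ≤ dist p q₀}
  rcases S.eq_empty_or_nonempty with hS | hS
  · exact ⟨legendre K f x - 1, by linarith,
      fun p hp => (eq_empty_iff_forall_notMem.mp hS p hp).elim⟩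
  have hSc : IsCompact S :=
    (isClosed_le continuous_const (continuous_id.dist continuous_const)).isCompact
  have hc : Continuous fun p : K => ⟪(p : F), x⟫ - f p := by fun_prop
  obtain ⟨p₀, hp₀, hmax⟩ := hSc.exists_isMaxOn hS hc.continuousOn
  refine ⟨_, (le_legendre hf p₀ x).lt_of_ne fun heq => ?_, fun p hp => hmax hp⟩
  have hp₀q₀ : (p₀ : F) = q₀ := by
    rw [← gradient_legendre_eq hf hd heq.symm, gradient_legendre_eq hf hd hq₀]
  have : dist p₀ q₀ = 0 := by rw [Subtype.dist_eq, hp₀q₀, dist_self]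
  exact absurd hp₀ (by simp only [S, mem_ofPred_eq, this]; linarith)

theorem eventually_dist_lt_of_legendre_perturb_eq [CompactSpace K] [Nonempty K]
    (hf : Continuous f) (ζ : F →ᵇ ℝ) {x : F} (hd : DifferentiableAt ℝ (legendre K f) x) {q₀ : K}
    (hq₀ : legendre K f x = ⟪(q₀ : F), x⟫ - f q₀) {δ : ℝ} (hδ : 0 < δ) :
    ∀ᶠ t in 𝓝 (0 : ℝ), ∀ q : K,
      legendre K (fun p => f p + t * ζ p) x = ⟪(q : F), x⟫ - (f q + t * ζ q) → dist q q₀ < δ := by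
  obtain ⟨m, hm, hfar⟩ := exists_lt_legendre_of_le_dist hf hd hq₀ hδ
  have hsmall : ∀ᶠ t in 𝓝 (0 : ℝ), |t| * (2 * ‖ζ‖) < legendre K f x - m :=
    ((continuous_abs.mul continuous_const).tendsto' 0 0 (by simp)).eventually
      (gt_mem_nhds (by linarith))
  filter_upwards [hsmall] with t ht q hq
  by_contra hqfar
  have hζ : ∀ p : F, |t * ζ p| ≤ |t| * ‖ζ‖ := fun p => by
    rw [abs_mul]; gcongr; exact ζ.norm_coe_le_norm p
  have hlow := le_legendre (f := fun p => f p + t * ζ p) (by fun_prop) q₀ x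
  have hq_le := hfar q (not_lt.mp hqfar)
  linarith [abs_le.mp (hζ q₀), abs_le.mp (hζ q)]

theorem tendsto_legendre_perturb_div [CompactSpace K] [Nonempty K] (hf : Continuous f)
    (ζ : F →ᵇ ℝ) {x : F} (hd : DifferentiableAt ℝ (legendre K f) x) :
    Tendsto (fun t : ℝ => (legendre K (fun q => f q + t * ζ q) x - legendre K f x) / t)
      (𝓝[≠] 0) (𝓝 (-ζ (gradient (legendre K f) x))) := by
  obtain ⟨q₀, hq₀⟩ := exists_legendre_eq hf x
  rw [gradient_legendre_eq hf hd hq₀, Metric.tendsto_nhds]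
  intro ε hε
  obtain ⟨δ, hδ, hζδ⟩ := Metric.continuousAt_iff.mp ζ.continuous.continuousAt ε hε
  filter_upwards [self_mem_nhdsWithin,
    nhdsWithin_le_nhds (eventually_dist_lt_of_legendre_perturb_eq hf ζ hd hq₀ hδ)] with t ht hnear
  obtain ⟨qₜ, hqₜ⟩ := exists_legendre_eq (f := fun p => f p + t * ζ p) (by fun_prop) x
  rw [Real.dist_eq, sub_neg_eq_add]
  exact (abs_legendre_perturb_div_add_le hf ζ ht hq₀ hqₜ).trans_lt
    (by simpa only [Real.dist_eq] using hζδ (hnear qₜ hqₜ))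

theorem youngGap_gradient_legendre_eq_zero [CompactSpace K] [Nonempty K]
    (hf : Continuous f) (hfix : legendreOn K (legendreOn K f) = f) {x : F}
    (hd : DifferentiableAt ℝ (legendre K f) x) :
    youngGap K f x (gradient (legendre K f) x) = 0 := by
  obtain ⟨q, hq⟩ := exists_legendre_eq hf x
  have hψ : legendre K (legendreOn K f) q = f q := congrFun hfix q
  rw [gradient_legendre_eq hf hd hq, youngGap, hψ, hq, real_inner_comm]
  ring

theorem eq_gradient_legendre_of_youngGap_eq_zero [CompactSpace K]
    (hf : Continuous f) (hfix : legendreOn K (legendreOn K f) = f) {x y : F}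
    (hd : DifferentiableAt ℝ (legendre K f) x) (hy : y ∈ K) (h : youngGap K f x y = 0) :
    y = gradient (legendre K f) x := by
  have hψ : legendre K (legendreOn K f) y = f ⟨y, hy⟩ := congrFun hfix ⟨y, hy⟩
  rw [youngGap, hψ, real_inner_comm] at h
  exact (gradient_eq_of_forall_inner_sub_le (le_legendre hf ⟨y, hy⟩) (by linarith) hd).symm

end Gradient

theorem measurable_gradient [MeasurableSpace F] [BorelSpace F] [CompleteSpace F] (φ : F → ℝ) :
    Measurable (gradient φ) :=
  (InnerProductSpace.toDual ℝ F).symm.continuous.measurable.comp (measurable_fderiv ℝ φ)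

section Dual

variable [MeasurableSpace F] {K : Set F} {μ ν : Measure F} {f g : K → ℝ}

theorem integrable_legendre [BorelSpace F] [CompactSpace K] [Nonempty K] [IsFiniteMeasure μ]
    (hμK : μ Kᶜ = 0) (hf : Continuous f) : Integrable (legendre K f) μ :=
  integrable_of_continuous_of_measure_compl_eq_zero
    (isCompact_iff_compactSpace.mpr ‹CompactSpace K›) hμK (continuous_legendre hf)

noncomputable def kantorovichDual (μ ν : Measure F) (K : Set F) (g : K → ℝ) : ℝ :=
  ∫ x, legendre K g x ∂μ + ∫ y, legendre K (legendreOn K g) y ∂ν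

theorem kantorovichDual_legendreOn_legendreOn [CompactSpace K] [Nonempty K] (hμK : μ Kᶜ = 0)
    (hg : Continuous g) :
    kantorovichDual μ ν K (legendreOn K (legendreOn K g)) = kantorovichDual μ ν K g := by
  rw [kantorovichDual, kantorovichDual, legendreOn_legendreOn_legendreOn hg]
  congr 1
  refine integral_congr_ae ?_
  filter_upwards [ae_iff.mpr hμK] with x hx
  exact congrFun (legendreOn_legendreOn_legendreOn hg) ⟨x, hx⟩

theorem kantorovichDual_add_const [BorelSpace F] [CompactSpace K] [Nonempty K]
    [IsProbabilityMeasure μ] [IsProbabilityMeasure ν] (hμK : μ Kᶜ = 0) (hνK : ν Kᶜ = 0)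
    (hg : Continuous g) (c : ℝ) :
    kantorovichDual μ ν K (fun q => g q + c) = kantorovichDual μ ν K g := by
  have h : legendreOn K (fun q => g q + c) = fun q => legendreOn K g q + -c :=
    funext fun q => (legendre_add_const hg c q).trans (sub_eq_add_neg _ _)
  simp only [kantorovichDual, h, legendre_add_const hg,
    legendre_add_const (continuous_legendreOn hg)]
  rw [integral_sub (integrable_legendre hμK hg) (integrable_const c),
    integral_sub (integrable_legendre hνK (continuous_legendreOn hg)) (integrable_const _)]
  simp

theorem abs_integral_legendre_sub_integral_legendre_le [BorelSpace F] [CompactSpace K]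
    [Nonempty K] [IsProbabilityMeasure μ] (hμK : μ Kᶜ = 0) (hf : Continuous f) (hg : Continuous g)
    {c : ℝ} (h : ∀ q, |f q - g q| ≤ c) :
    |∫ x, legendre K f x ∂μ - ∫ x, legendre K g x ∂μ| ≤ c := by
  rw [← integral_sub (integrable_legendre hμK hf) (integrable_legendre hμK hg)]
  simpa using norm_integral_le_of_norm_le_const (μ := μ) (Eventually.of_forall fun x =>
    (Real.norm_eq_abs _).trans_le (abs_legendre_sub_legendre_le hf hg h x))

theorem lipschitzWith_kantorovichDual [BorelSpace F] [CompactSpace K] [Nonempty K]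
    [IsProbabilityMeasure μ] [IsProbabilityMeasure ν] (hμK : μ Kᶜ = 0) (hνK : ν Kᶜ = 0) :
    LipschitzWith 2 fun g : K →ᵇ ℝ => kantorovichDual μ ν K g := by
  refine LipschitzWith.of_dist_le_mul fun g g' => ?_
  have hgg' (q : K) : |g q - g' q| ≤ dist g g' := by
    simpa [Real.dist_eq] using g.dist_coe_le_dist (g := g') q
  have h₁ := abs_integral_legendre_sub_integral_legendre_le hμK g.continuous g'.continuous hgg'
  have h₂ := abs_integral_legendre_sub_integral_legendre_le hνK
    (continuous_legendreOn g.continuous) (continuous_legendreOn g'.continuous)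
    (abs_legendre_sub_legendre_le g.continuous g'.continuous hgg' ·)
  rw [Real.dist_eq, kantorovichDual, kantorovichDual, add_sub_add_comm]
  push_cast
  linarith [abs_add_le (∫ x, legendre K g x ∂μ - ∫ x, legendre K g' x ∂μ)
    (∫ y, legendre K (legendreOn K g) y ∂ν - ∫ y, legendre K (legendreOn K g') y ∂ν)]

theorem exists_normalized_kantorovichDual_eq [BorelSpace F] [CompactSpace K] [Nonempty K]
    [IsProbabilityMeasure μ] [IsProbabilityMeasure ν] (hμK : μ Kᶜ = 0) (hνK : ν Kᶜ = 0)
    {R : ℝ≥0} (hR : ∀ x ∈ K, ‖x‖ ≤ R) (q₀ : K) (hg : Continuous g) :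
    ∃ h : K →ᵇ ℝ, (LipschitzWith R h ∧ h q₀ = 0) ∧ legendreOn K (legendreOn K h) = h ∧
      kantorovichDual μ ν K h = kantorovichDual μ ν K g := by
  set g₂ := legendreOn K (legendreOn K g)
  have hg₂ : Continuous g₂ := continuous_legendreOn (continuous_legendreOn hg)
  have hlip : LipschitzWith R g₂ := lipschitzWith_legendreOn (continuous_legendreOn hg) hR
  refine ⟨BoundedContinuousFunction.mkOfCompact ⟨fun q => g₂ q + -g₂ q₀, by fun_prop⟩,
    ⟨LipschitzWith.of_dist_le_mul fun p q => ?_, by simp⟩, ?_, ?_⟩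
  · simpa [dist_add_right] using hlip.dist_le_mul p q
  · change legendreOn K (legendreOn K fun q => g₂ q + -g₂ q₀) = fun q => g₂ q + -g₂ q₀
    rw [legendreOn_legendreOn_add_const hg₂,
      legendreOn_legendreOn_legendreOn (continuous_legendreOn hg)]
  · change kantorovichDual μ ν K (fun q => g₂ q + -g₂ q₀) = _
    rw [kantorovichDual_add_const hμK hνK hg₂, kantorovichDual_legendreOn_legendreOn hμK hg]

theorem exists_isMin_kantorovichDual [BorelSpace F] [CompactSpace K] [Nonempty K]
    [IsProbabilityMeasure μ] [IsProbabilityMeasure ν] (hμK : μ Kᶜ = 0) (hνK : ν Kᶜ = 0)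
    {R : ℝ≥0} (hR : ∀ x ∈ K, ‖x‖ ≤ R) :
    ∃ f : K → ℝ, Continuous f ∧ legendreOn K (legendreOn K f) = f ∧
      ∀ g : K → ℝ, Continuous g → kantorovichDual μ ν K f ≤ kantorovichDual μ ν K g := by
  obtain ⟨q₀⟩ := ‹Nonempty K›
  obtain ⟨h₀, -, hmin⟩ := (isCompact_setOf_lipschitzWith_apply_eq_zero R q₀).exists_isMinOn
    ⟨0, LipschitzWith.const' 0, rfl⟩ (lipschitzWith_kantorovichDual hμK hνK).continuous.continuousOn
  obtain ⟨h, -, hfix, hh⟩ := exists_normalized_kantorovichDual_eq hμK hνK hR q₀ h₀.continuous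
  refine ⟨h, h.continuous, hfix, fun g hg => ?_⟩
  obtain ⟨g', hg', -, hgg'⟩ := exists_normalized_kantorovichDual_eq hμK hνK hR q₀ hg
  calc kantorovichDual μ ν K h = kantorovichDual μ ν K h₀ := hh
    _ ≤ kantorovichDual μ ν K g' := hmin hg'
    _ = kantorovichDual μ ν K g := hgg'

end Dual

section EulerLagrange

variable [MeasurableSpace F] [BorelSpace F] {K : Set F} {μ ν : Measure F} {f : K → ℝ}

theorem integral_legendre_le_integral_legendre_perturb_add [CompactSpace K] [Nonempty K]
    [IsFiniteMeasure ν] (hνK : ν Kᶜ = 0) (hf : Continuous f)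
    (hfix : legendreOn K (legendreOn K f) = f)
    (hmin : ∀ g : K → ℝ, Continuous g → kantorovichDual μ ν K f ≤ kantorovichDual μ ν K g)
    (ζ : F →ᵇ ℝ) (t : ℝ) :
    ∫ x, legendre K f x ∂μ ≤
      ∫ x, legendre K (fun q => f q + t * ζ q) x ∂μ + t * ∫ y, ζ y ∂ν := by
  set g : K → ℝ := fun q => f q + t * ζ q
  have hg : Continuous g := by fun_prop
  have hψ := integrable_legendre hνK (continuous_legendreOn hf)
  have hζ := integrable_of_continuous_of_measure_compl_eq_zero
    (isCompact_iff_compactSpace.mpr ‹CompactSpace K›) hνK ζ.continuous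
  have hle : ∫ y, legendre K (legendreOn K g) y ∂ν ≤
      ∫ y, (legendre K (legendreOn K f) y + t * ζ y) ∂ν := by
    refine integral_mono_ae (integrable_legendre hνK (continuous_legendreOn hg))
      (hψ.add (hζ.const_mul t)) ?_
    filter_upwards [ae_iff.mpr hνK] with y hy
    calc legendre K (legendreOn K g) y = legendreOn K (legendreOn K g) ⟨y, hy⟩ := rfl
      _ ≤ g ⟨y, hy⟩ := legendreOn_legendreOn_le hg _
      _ = legendreOn K (legendreOn K f) ⟨y, hy⟩ + t * ζ y := by rw [hfix]
  have hJ := hmin g hg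
  rw [kantorovichDual, kantorovichDual] at hJ
  rw [integral_add hψ (hζ.const_mul t), integral_const_mul] at hle
  linarith

theorem tendsto_integral_legendre_perturb_div [CompleteSpace F] [CompactSpace K] [Nonempty K]
    [IsFiniteMeasure μ] (hμK : μ Kᶜ = 0) (hf : Continuous f) (ζ : F →ᵇ ℝ)
    (hdiff : ∀ᵐ x ∂μ, DifferentiableAt ℝ (legendre K f) x) :
    Tendsto (fun t : ℝ =>
        (∫ x, legendre K (fun q => f q + t * ζ q) x ∂μ - ∫ x, legendre K f x ∂μ) / t)
      (𝓝[≠] 0) (𝓝 (-∫ x, ζ (gradient (legendre K f) x) ∂μ)) := by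
  have hft (t : ℝ) : Continuous fun q : K => f q + t * ζ q := by fun_prop
  rw [← integral_neg]
  refine (tendsto_integral_filter_of_dominated_convergence (fun _ => ‖ζ‖)
    (F := fun t x => (legendre K (fun q => f q + t * ζ q) x - legendre K f x) / t) ?_ ?_
    (integrable_const _) ?_).congr fun t => ?_
  · exact Eventually.of_forall fun t => (((continuous_legendre (hft t)).sub
      (continuous_legendre hf)).div_const t).aestronglyMeasurable
  · filter_upwards [self_mem_nhdsWithin] with t (ht : t ≠ 0)
    refine Eventually.of_forall fun x => ?_
    have hdist := abs_legendre_sub_legendre_le (hft t) hf (c := |t| * ‖ζ‖) (fun q => by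
      rw [add_sub_cancel_left, abs_mul]; gcongr; exact ζ.norm_coe_le_norm q) x
    rw [Real.norm_eq_abs, abs_div, div_le_iff₀ (abs_pos.mpr ht)]
    linarith
  · filter_upwards [hdiff] with x hx
    exact tendsto_legendre_perturb_div hf ζ hx
  · rw [integral_div, integral_sub (integrable_legendre hμK (hft t)) (integrable_legendre hμK hf)]

theorem integral_comp_gradient_legendre_le [CompleteSpace F] [CompactSpace K] [Nonempty K]
    [IsFiniteMeasure μ] [IsFiniteMeasure ν] (hμK : μ Kᶜ = 0) (hνK : ν Kᶜ = 0)
    (hf : Continuous f) (hfix : legendreOn K (legendreOn K f) = f)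
    (hmin : ∀ g : K → ℝ, Continuous g → kantorovichDual μ ν K f ≤ kantorovichDual μ ν K g)
    (hdiff : ∀ᵐ x ∂μ, DifferentiableAt ℝ (legendre K f) x) (ζ : F →ᵇ ℝ) :
    ∫ x, ζ (gradient (legendre K f) x) ∂μ ≤ ∫ y, ζ y ∂ν := by
  have hlim := (tendsto_integral_legendre_perturb_div hμK hf ζ hdiff).mono_left
    (nhdsWithin_mono 0 fun t (ht : t ∈ Ioi 0) => ne_of_gt ht)
  have hquot : ∀ᶠ t in 𝓝[>] (0 : ℝ), -∫ y, ζ y ∂ν ≤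
      (∫ x, legendre K (fun q => f q + t * ζ q) x ∂μ - ∫ x, legendre K f x ∂μ) / t :=
    eventually_mem_nhdsWithin.mono fun t (ht : t ∈ Ioi 0) => by
      rw [le_div_iff₀ ht]
      linarith [integral_legendre_le_integral_legendre_perturb_add hνK hf hfix hmin ζ t]
  linarith [ge_of_tendsto hlim hquot]

theorem map_gradient_legendre_eq [CompleteSpace F] [CompactSpace K] [Nonempty K]
    [IsFiniteMeasure μ] [IsFiniteMeasure ν] (hμK : μ Kᶜ = 0) (hνK : ν Kᶜ = 0)
    (hf : Continuous f) (hfix : legendreOn K (legendreOn K f) = f)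
    (hmin : ∀ g : K → ℝ, Continuous g → kantorovichDual μ ν K f ≤ kantorovichDual μ ν K g)
    (hdiff : ∀ᵐ x ∂μ, DifferentiableAt ℝ (legendre K f) x) :
    μ.map (gradient (legendre K f)) = ν := by
  refine ext_of_forall_integral_eq_of_IsFiniteMeasure fun ζ => ?_
  rw [integral_map (measurable_gradient _).aemeasurable ζ.continuous.aestronglyMeasurable]
  have h₁ := integral_comp_gradient_legendre_le hμK hνK hf hfix hmin hdiff ζ
  have h₂ := integral_comp_gradient_legendre_le hμK hνK hf hfix hmin hdiff (-ζ)
  simp only [BoundedContinuousFunction.coe_neg, Pi.neg_apply, integral_neg] at h₂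
  linarith

end EulerLagrange

section Monge

variable [MeasurableSpace F] [BorelSpace F] [SecondCountableTopology F] {μ ν : Measure F}
  {T : F → F}

theorem integrable_inner_apply (hT : Measurable T) (hx : Integrable (fun x => ‖x‖ ^ 2) μ)
    (hTx : Integrable (fun x => ‖T x‖ ^ 2) μ) : Integrable (fun x => ⟪x, T x⟫) μ := by
  refine (hx.add hTx).mono' (measurable_id.inner hT).aestronglyMeasurable
    (Eventually.of_forall fun x => ?_)
  rw [Real.norm_eq_abs, Pi.add_apply]
  nlinarith [abs_real_inner_le_norm x (T x), two_mul_le_add_sq ‖x‖ ‖T x‖, norm_nonneg x,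
    norm_nonneg (T x)]

theorem integral_norm_sub_sq_eq (hT : Measurable T) {φ ψ : F → ℝ}
    (hx : Integrable (fun x => ‖x‖ ^ 2) μ) (hTx : Integrable (fun x => ‖T x‖ ^ 2) μ)
    (hφ : Integrable φ μ) (hψT : Integrable (fun x => ψ (T x)) μ) :
    ∫ x, ‖x - T x‖ ^ 2 ∂μ = ∫ x, (‖x‖ ^ 2 - 2 * φ x) ∂μ + ∫ x, (‖T x‖ ^ 2 - 2 * ψ (T x)) ∂μ +
      2 * ∫ x, (φ x + ψ (T x) - ⟪x, T x⟫) ∂μ := by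
  have ha : Integrable (fun x => ‖x‖ ^ 2 - 2 * φ x) μ := hx.sub (hφ.const_mul 2)
  have hb : Integrable (fun x => ‖T x‖ ^ 2 - 2 * ψ (T x)) μ := hTx.sub (hψT.const_mul 2)
  have hab : Integrable (fun x => (‖x‖ ^ 2 - 2 * φ x) + (‖T x‖ ^ 2 - 2 * ψ (T x))) μ :=
    ha.add hb
  have hgap : Integrable (fun x => φ x + ψ (T x) - ⟪x, T x⟫) μ :=
    (hφ.add hψT).sub (integrable_inner_apply hT hx hTx)
  have hpt : (fun x => ‖x - T x‖ ^ 2) = fun x =>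
      (‖x‖ ^ 2 - 2 * φ x) + (‖T x‖ ^ 2 - 2 * ψ (T x)) + 2 * (φ x + ψ (T x) - ⟪x, T x⟫) := by
    funext x
    rw [norm_sub_sq_real]
    ring
  rw [hpt, integral_add hab (hgap.const_mul 2), integral_add ha hb, integral_const_mul]

variable {K : Set F} {f : K → ℝ}

theorem integrable_youngGap [CompactSpace K] [Nonempty K] [IsFiniteMeasure μ] (hμK : μ Kᶜ = 0)
    (hνK : ν Kᶜ = 0) (hf : Continuous f) (hT : Measurable T) (hTμ : μ.map T = ν) :
    Integrable (fun x => youngGap K f x (T x)) μ := by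
  have hK := isCompact_iff_compactSpace.mpr ‹CompactSpace K›
  exact ((integrable_legendre hμK hf).add (integrable_comp_of_map_eq hK hνK hT hTμ
    (continuous_legendre (continuous_legendreOn hf)))).sub (integrable_inner_apply hT
      (integrable_of_continuous_of_measure_compl_eq_zero hK hμK (continuous_norm.pow 2))
      (integrable_comp_of_map_eq hK hνK hT hTμ (continuous_norm.pow 2)))

theorem integral_norm_sub_sq_eq_integral_youngGap [CompactSpace K] [Nonempty K]
    [IsFiniteMeasure μ] (hμK : μ Kᶜ = 0) (hνK : ν Kᶜ = 0) (hf : Continuous f) (hT : Measurable T)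
    (hTμ : μ.map T = ν) :
    ∫ x, ‖x - T x‖ ^ 2 ∂μ = ∫ x, (‖x‖ ^ 2 - 2 * legendre K f x) ∂μ +
      ∫ y, (‖y‖ ^ 2 - 2 * legendre K (legendreOn K f) y) ∂ν +
      2 * ∫ x, youngGap K f x (T x) ∂μ := by
  have hK := isCompact_iff_compactSpace.mpr ‹CompactSpace K›
  have hψ := continuous_legendre (continuous_legendreOn hf)
  have hcont : Continuous fun y => ‖y‖ ^ 2 - 2 * legendre K (legendreOn K f) y := by fun_prop
  rw [integral_norm_sub_sq_eq hT
    (integrable_of_continuous_of_measure_compl_eq_zero hK hμK (continuous_norm.pow 2))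
    (integrable_comp_of_map_eq hK hνK hT hTμ (continuous_norm.pow 2))
    (integrable_legendre hμK hf) (integrable_comp_of_map_eq hK hνK hT hTμ hψ), ← hTμ,
    integral_map hT.aemeasurable hcont.aestronglyMeasurable]
  rfl

theorem integral_norm_sub_sq_eq_integral_norm_sub_gradient_sq_add [CompleteSpace F]
    [CompactSpace K] [Nonempty K] [IsFiniteMeasure μ] (hμK : μ Kᶜ = 0) (hνK : ν Kᶜ = 0)
    (hf : Continuous f) (hfix : legendreOn K (legendreOn K f) = f)
    (hdiff : ∀ᵐ x ∂μ, DifferentiableAt ℝ (legendre K f) x)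
    (hmap : μ.map (gradient (legendre K f)) = ν) (hT : Measurable T) (hTμ : μ.map T = ν) :
    ∫ x, ‖x - T x‖ ^ 2 ∂μ =
      ∫ x, ‖x - gradient (legendre K f) x‖ ^ 2 ∂μ + 2 * ∫ x, youngGap K f x (T x) ∂μ := by
  rw [integral_norm_sub_sq_eq_integral_youngGap hμK hνK hf hT hTμ,
    integral_norm_sub_sq_eq_integral_youngGap hμK hνK hf (measurable_gradient _) hmap,
    integral_eq_zero_of_ae (hdiff.mono fun x hx => youngGap_gradient_legendre_eq_zero hf hfix hx)]
  ring

theorem integral_norm_sub_sq_gradient_legendre_le [CompleteSpace F] [CompactSpace K] [Nonempty K]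
    [IsFiniteMeasure μ] (hμK : μ Kᶜ = 0) (hνK : ν Kᶜ = 0) (hf : Continuous f)
    (hfix : legendreOn K (legendreOn K f) = f)
    (hdiff : ∀ᵐ x ∂μ, DifferentiableAt ℝ (legendre K f) x)
    (hmap : μ.map (gradient (legendre K f)) = ν) (hT : Measurable T) (hTμ : μ.map T = ν) :
    ∫ x, ‖x - gradient (legendre K f) x‖ ^ 2 ∂μ ≤ ∫ x, ‖x - T x‖ ^ 2 ∂μ := by
  have hTK := ae_mem_of_map_eq hT.aemeasurable hTμ hνK
  linarith [integral_norm_sub_sq_eq_integral_norm_sub_gradient_sq_add hμK hνK hf hfix hdiff hmap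
    hT hTμ, integral_nonneg_of_ae (hTK.mono fun x hx => youngGap_nonneg hf hfix x hx)]

theorem ae_eq_gradient_legendre_of_integral_eq [CompleteSpace F] [CompactSpace K] [Nonempty K]
    [IsFiniteMeasure μ] (hμK : μ Kᶜ = 0) (hνK : ν Kᶜ = 0) (hf : Continuous f)
    (hfix : legendreOn K (legendreOn K f) = f)
    (hdiff : ∀ᵐ x ∂μ, DifferentiableAt ℝ (legendre K f) x)
    (hmap : μ.map (gradient (legendre K f)) = ν) (hT : Measurable T) (hTμ : μ.map T = ν)
    (hcost : ∫ x, ‖x - T x‖ ^ 2 ∂μ = ∫ x, ‖x - gradient (legendre K f) x‖ ^ 2 ∂μ) :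
    ∀ᵐ x ∂μ, T x = gradient (legendre K f) x := by
  rw [integral_norm_sub_sq_eq_integral_norm_sub_gradient_sq_add hμK hνK hf hfix hdiff hmap hT
    hTμ] at hcost
  have hTK := ae_mem_of_map_eq hT.aemeasurable hTμ hνK
  have hgap := (integral_eq_zero_iff_of_nonneg_ae
    (hTK.mono fun x hx => youngGap_nonneg hf hfix x hx)
    (integrable_youngGap hμK hνK hf hT hTμ)).mp (by linarith)
  filter_upwards [hgap, hdiff, hTK] with x hx hdx hTx
  exact eq_gradient_legendre_of_youngGap_eq_zero hf hfix hdx hTx hx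

end Monge

end Brenier

open Brenier

theorem stmt1_general {n : ℕ} (Ω : Set (EuclideanSpace ℝ (Fin n)))
    (hΩbdd : Bornology.IsBounded Ω)
    (μ ν : Measure (EuclideanSpace ℝ (Fin n)))
    [IsProbabilityMeasure μ] [IsProbabilityMeasure ν]
    (hμΩ : μ Ωᶜ = 0) (hνΩ : ν Ωᶜ = 0)
    (hμac : μ ≪ volume) :
    ∃ φ : EuclideanSpace ℝ (Fin n) → ℝ,
      ConvexOn ℝ Set.univ φ ∧
      (∃ D : Set (EuclideanSpace ℝ (Fin n)), MeasurableSet D ∧ μ Dᶜ = 0 ∧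
        ∀ x ∈ D, DifferentiableAt ℝ φ x) ∧
      -- (i) the gradient map pushes μ forward to ν
      Measure.map (fun x => gradient φ x) μ = ν ∧
      -- (ii) the gradient map minimizes the Monge quadratic cost
      (∀ T : EuclideanSpace ℝ (Fin n) → EuclideanSpace ℝ (Fin n),
        Measurable T → Measure.map T μ = ν →
        ∫ x, ‖x - gradient φ x‖ ^ 2 ∂μ ≤ ∫ x, ‖x - T x‖ ^ 2 ∂μ) ∧
      -- (iii) uniqueness of the optimal map
      (∀ T : EuclideanSpace ℝ (Fin n) → EuclideanSpace ℝ (Fin n),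
        Measurable T → Measure.map T μ = ν →
        ∫ x, ‖x - T x‖ ^ 2 ∂μ = ∫ x, ‖x - gradient φ x‖ ^ 2 ∂μ →
        ∀ᵐ x ∂μ, T x = gradient φ x) := by
  set K := closure Ω
  have : CompactSpace K := isCompact_iff_compactSpace.mp hΩbdd.isCompact_closure
  have hμK : μ Kᶜ = 0 := measure_mono_null (compl_subset_compl.mpr subset_closure) hμΩ
  have hνK : ν Kᶜ = 0 := measure_mono_null (compl_subset_compl.mpr subset_closure) hνΩ
  obtain ⟨x₀, hx₀⟩ := (ae_iff.mpr hμK : ∀ᵐ x ∂μ, x ∈ K).exists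
  have : Nonempty K := ⟨⟨x₀, hx₀⟩⟩
  obtain ⟨R, hR⟩ := hΩbdd.closure.exists_nnreal_norm_le
  obtain ⟨f, hf, hfix, hmin⟩ := exists_isMin_kantorovichDual hμK hνK hR
  have hdiff : ∀ᵐ x ∂μ, DifferentiableAt ℝ (legendre K f) x :=
    hμac.ae_le (lipschitzWith_legendre hf hR).ae_differentiableAt
  have hmap := map_gradient_legendre_eq hμK hνK hf hfix hmin hdiff
  exact ⟨legendre K f, convexOn_legendre hf,
    ⟨_, measurableSet_of_differentiableAt ℝ _, ae_iff.mp hdiff, fun x hx => hx⟩, hmap,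
    fun T hT hTμ => integral_norm_sub_sq_gradient_legendre_le hμK hνK hf hfix hdiff hmap hT hTμ,
    fun T hT hTμ => ae_eq_gradient_legendre_of_integral_eq hμK hνK hf hfix hdiff hmap hT hTμ⟩

/-- **Brenier's theorem.** Let `Ω` be a bounded open subset of `ℝⁿ` and `μ, ν`
probability measures supported in `Ω`, absolutely continuous w.r.t. Lebesgue measure with
bounded densities.  Then there is a convex function `φ : ℝⁿ → ℝ`, differentiable on a Borel
set of full `μ`-measure, such that `(∇φ)_# μ = ν`, the map `∇φ` minimizes the Monge cost
`∫ ‖x - T x‖² dμ` among Borel maps `T` pushing `μ` to `ν`, and any minimizer agrees with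
`∇φ` `μ`-almost everywhere. -/
theorem stmt1 {n : ℕ} (Ω : Set (EuclideanSpace ℝ (Fin n)))
    (hΩopen : IsOpen Ω) (hΩbdd : Bornology.IsBounded Ω)
    (μ ν : Measure (EuclideanSpace ℝ (Fin n)))
    [IsProbabilityMeasure μ] [IsProbabilityMeasure ν]
    (hμΩ : μ Ωᶜ = 0) (hνΩ : ν Ωᶜ = 0)
    (hμac : μ ≪ volume) (hνac : ν ≪ volume)
    (hμbdd : ∃ C : ℝ, ∀ᵐ x ∂volume, μ.rnDeriv volume x ≤ ENNReal.ofReal C)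
    (hνbdd : ∃ C : ℝ, ∀ᵐ x ∂volume, ν.rnDeriv volume x ≤ ENNReal.ofReal C) :
    ∃ φ : EuclideanSpace ℝ (Fin n) → ℝ,
      ConvexOn ℝ Set.univ φ ∧
      (∃ D : Set (EuclideanSpace ℝ (Fin n)), MeasurableSet D ∧ μ Dᶜ = 0 ∧
        ∀ x ∈ D, DifferentiableAt ℝ φ x) ∧
      -- (i) the gradient map pushes μ forward to ν
      Measure.map (fun x => gradient φ x) μ = ν ∧
      -- (ii) the gradient map minimizes the Monge quadratic cost
      (∀ T : EuclideanSpace ℝ (Fin n) → EuclideanSpace ℝ (Fin n),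
        Measurable T → Measure.map T μ = ν →
        ∫ x, ‖x - gradient φ x‖ ^ 2 ∂μ ≤ ∫ x, ‖x - T x‖ ^ 2 ∂μ) ∧
      -- (iii) uniqueness of the optimal map
      (∀ T : EuclideanSpace ℝ (Fin n) → EuclideanSpace ℝ (Fin n),
        Measurable T → Measure.map T μ = ν →
        ∫ x, ‖x - T x‖ ^ 2 ∂μ = ∫ x, ‖x - gradient φ x‖ ^ 2 ∂μ →
        ∀ᵐ x ∂μ, T x = gradient φ x) :=
  stmt1_general Ω hΩbdd μ ν hμΩ hνΩ hμac
end

section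
/- Let Ω be a bounded open subset of ℝ³ and let T : ℝ³ → ℝ³ be a C² map restricting to a bijection of Ω onto itself with det DT(x) > 0 for all x ∈ Ω. Let u = (u¹, u², u³) : ℝ³ → ℝ³ be a C¹ vector field whose helicity density Θ = u¹(∂₂u³ − ∂₃u²) + u²(∂₃u¹ − ∂₁u³) + u³(∂₁u² − ∂₂u¹) is integrable on Ω. Define û_j(x) = Σ_{p=1}^{3} u^p(T(x))·∂_jT^p(x) for j = 1,2,3 and let Θ̂ be the helicity density of (û₁, û₂, û₃). Then ∫_Ω Θ̂(x) dx = ∫_Ω Θ(x) dx. -/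
/-!
Write `J = DT(x)` and `v = u(T x)`. The pulled-back field is `û = Jᵀ v`, and by the chain rule
its Jacobian matrix is `Jᵀ Du(T x) J` plus the symmetric matrix `Σ_p v_p ∂_j ∂_k T^p`, which does
not contribute to the curl. Since `Jᵀ [ω]ₓ J = [adj(J) ω]ₓ` for the skew matrix of a vector `ω`,
the helicity density transforms as `Θ̂(x) = det DT(x) · Θ(T x)`, and the change of variables
formula for the bijection `T : Ω → Ω` with positive Jacobian gives `∫_Ω Θ̂ = ∫_Ω Θ`.
-/

open MeasureTheory

/-- Partial derivative `∂_p f (x)` of a real-valued function on `ℝ³`. -/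
noncomputable def pd3 (p : Fin 3) (f : (Fin 3 → ℝ) → ℝ) (x : Fin 3 → ℝ) : ℝ :=
  fderiv ℝ f x (Pi.single p 1)

/-- Helicity density of a vector field with components `w 0, w 1, w 2` on `ℝ³`:
`Θ = w¹(∂₂w³ − ∂₃w²) + w²(∂₃w¹ − ∂₁w³) + w³(∂₁w² − ∂₂w¹)`. -/
noncomputable def helicity3 (w : Fin 3 → (Fin 3 → ℝ) → ℝ) (x : Fin 3 → ℝ) : ℝ :=
  w 0 x * (pd3 1 (w 2) x - pd3 2 (w 1) x)
    + w 1 x * (pd3 2 (w 0) x - pd3 0 (w 2) x)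
    + w 2 x * (pd3 0 (w 1) x - pd3 1 (w 0) x)

open Matrix

-- `M` is the Jacobian matrix `M k j = ∂_j w_k`, so this is `v · curl w`.
def helicityForm (v : Fin 3 → ℝ) (M : Matrix (Fin 3) (Fin 3) ℝ) : ℝ :=
  v 0 * (M 2 1 - M 1 2) + v 1 * (M 0 2 - M 2 0) + v 2 * (M 1 0 - M 0 1)

theorem helicityForm_add_of_isSymm (v : Fin 3 → ℝ) (M : Matrix (Fin 3) (Fin 3) ℝ)
    {S : Matrix (Fin 3) (Fin 3) ℝ} (hS : S.IsSymm) :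
    helicityForm v (M + S) = helicityForm v M := by
  simp only [helicityForm, Matrix.add_apply, hS.apply 1 2, hS.apply 0 2, hS.apply 0 1]
  ring

-- `Jᵀ [ω]ₓ J = [adj(J) ω]ₓ` and `(Jᵀ v) · adj(J) ω = det J (v · ω)`.
theorem helicityForm_vecMul_transpose_mul_mul (v : Fin 3 → ℝ) (M J : Matrix (Fin 3) (Fin 3) ℝ) :
    helicityForm (v ᵥ* J) (Jᵀ * M * J) = J.det * helicityForm v M := by
  simp only [helicityForm, vecMul, dotProduct, mul_apply, transpose_apply, det_fin_three,
    Fin.sum_univ_three]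
  ring

variable {ι : Type*} [Fintype ι] [DecidableEq ι]

noncomputable def jacobianMatrix (F : (ι → ℝ) → ι → ℝ) (x : ι → ℝ) : Matrix ι ι ℝ :=
  LinearMap.toMatrix' (fderiv ℝ F x : (ι → ℝ) →ₗ[ℝ] ι → ℝ)

noncomputable def pullbackOneForm (T u : (ι → ℝ) → ι → ℝ) (k : ι) (y : ι → ℝ) : ℝ :=
  ∑ p, u (T y) p * fderiv ℝ T y (Pi.single k 1) p

theorem pullbackOneForm_eq_vecMul (T u : (ι → ℝ) → ι → ℝ) (y : ι → ℝ) :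
    (fun k => pullbackOneForm T u k y) = u (T y) ᵥ* jacobianMatrix T y := by
  ext k
  simp [pullbackOneForm, jacobianMatrix, vecMul, dotProduct, LinearMap.toMatrix'_apply]

noncomputable def partialMatrix (w : ι → (ι → ℝ) → ℝ) (x : ι → ℝ) : Matrix ι ι ℝ :=
  of fun k j => fderiv ℝ (w k) x (Pi.single j 1)

theorem partialMatrix_eq_jacobianMatrix {F : (ι → ℝ) → ι → ℝ} {x : ι → ℝ}
    (hF : DifferentiableAt ℝ F x) : partialMatrix (fun k y => F y k) x = jacobianMatrix F x := by
  ext k j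
  simp [partialMatrix, jacobianMatrix, LinearMap.toMatrix'_apply, fderiv_apply hF]

theorem partialMatrix_pullbackOneForm {T u : (ι → ℝ) → ι → ℝ} (hT : ContDiff ℝ 2 T)
    (hu : Differentiable ℝ u) (x : ι → ℝ) :
    partialMatrix (pullbackOneForm T u) x =
      (jacobianMatrix T x)ᵀ * jacobianMatrix u (T x) * jacobianMatrix T x +
        of fun k j =>
          ∑ p, u (T x) p * fderiv ℝ (fderiv ℝ T) x (Pi.single j 1) (Pi.single k 1) p := by
  have hTd : Differentiable ℝ T := hT.differentiable (by norm_num)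
  have hD2 : HasFDerivAt (fderiv ℝ T) (fderiv ℝ (fderiv ℝ T) x) x :=
    ((hT.fderiv_right (m := 1) (by norm_num)).differentiable (by norm_num) x).hasFDerivAt
  have huT : HasFDerivAt (fun y => u (T y)) ((fderiv ℝ u (T x)).comp (fderiv ℝ T x)) x :=
    (hu (T x)).hasFDerivAt.comp x (hTd x).hasFDerivAt
  ext k j
  have hk : HasFDerivAt (pullbackOneForm T u k) _ x :=
    HasFDerivAt.fun_sum (u := Finset.univ) fun p _ => (hasFDerivAt_pi'.1 huT p).mul
      (hasFDerivAt_pi'.1 (hD2.clm_apply (hasFDerivAt_const (Pi.single k 1) x)) p)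
  have hDu (v : ι → ℝ) (p : ι) : fderiv ℝ u (T x) v p = (jacobianMatrix u (T x) *ᵥ v) p := by
    rw [jacobianMatrix, LinearMap.toMatrix'_mulVec]; rfl
  simp only [partialMatrix, of_apply, hk.fderiv, ContinuousLinearMap.comp_zero, zero_add,
    Finset.sum_add_distrib, _root_.add_apply, _root_.sum_apply, _root_.smul_apply,
    ContinuousLinearMap.comp_apply, ContinuousLinearMap.flip_apply, ContinuousLinearMap.proj_apply,
    smul_eq_mul, jacobianMatrix, Matrix.add_apply, mul_apply, transpose_apply,
    LinearMap.toMatrix'_apply, ContinuousLinearMap.coe_coe, Finset.sum_mul]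
  rw [add_comm, Finset.sum_comm]
  congr 1
  refine Finset.sum_congr rfl fun p _ => ?_
  rw [hDu]
  simp only [mulVec, dotProduct, jacobianMatrix, LinearMap.toMatrix'_apply, Finset.mul_sum]
  exact Finset.sum_congr rfl fun r _ => (mul_assoc _ _ _).symm

theorem helicity3_eq_helicityForm (w : Fin 3 → (Fin 3 → ℝ) → ℝ) (x : Fin 3 → ℝ) :
    helicity3 w x = helicityForm (fun k => w k x) (partialMatrix w x) :=
  rfl

theorem helicity3_pullbackOneForm {T u : (Fin 3 → ℝ) → Fin 3 → ℝ} (hT : ContDiff ℝ 2 T)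
    (hu : Differentiable ℝ u) (x : Fin 3 → ℝ) :
    helicity3 (pullbackOneForm T u) x =
      (fderiv ℝ T x).det * helicity3 (fun p y => u y p) (T x) := by
  have hsymm : (of fun k j => ∑ p, u (T x) p *
      fderiv ℝ (fderiv ℝ T) x (Pi.single j 1) (Pi.single k 1) p).IsSymm := by
    refine IsSymm.ext fun k j => ?_
    simp only [of_apply, (hT.contDiffAt.isSymmSndFDerivAt (by simp)).eq]
  rw [helicity3_eq_helicityForm, helicity3_eq_helicityForm, partialMatrix_pullbackOneForm hT hu,
    pullbackOneForm_eq_vecMul, partialMatrix_eq_jacobianMatrix (hu _),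
    helicityForm_add_of_isSymm _ _ hsymm, helicityForm_vecMul_transpose_mul_mul,
    jacobianMatrix, LinearMap.det_toMatrix']

theorem stmt8_general (Ω : Set (Fin 3 → ℝ)) (hΩopen : IsOpen Ω)
    (T : (Fin 3 → ℝ) → (Fin 3 → ℝ)) (hT : ContDiff ℝ 2 T)
    (hTbij : Set.BijOn T Ω Ω)
    (hdet : ∀ x ∈ Ω, 0 < (fderiv ℝ T x).det)
    (u : (Fin 3 → ℝ) → (Fin 3 → ℝ)) (hu : ContDiff ℝ 1 u)
    (uhat : Fin 3 → (Fin 3 → ℝ) → ℝ)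
    (huhat : ∀ (j : Fin 3) (x : Fin 3 → ℝ),
      uhat j x = ∑ p : Fin 3, u (T x) p * pd3 j (fun y => T y p) x) :
    ∫ x in Ω, helicity3 uhat x = ∫ x in Ω, helicity3 (fun p y => u y p) x := by
  have hTd : Differentiable ℝ T := hT.differentiable (by norm_num)
  obtain rfl : uhat = pullbackOneForm T u := by
    ext k y
    simp [huhat, pd3, pullbackOneForm, fderiv_apply (hTd y)]
  calc ∫ x in Ω, helicity3 (pullbackOneForm T u) x
      = ∫ x in Ω, |(fderiv ℝ T x).det| • helicity3 (fun p y => u y p) (T x) := by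
        refine setIntegral_congr_fun hΩopen.measurableSet fun x hx => ?_
        rw [helicity3_pullbackOneForm hT (hu.differentiable one_ne_zero), abs_of_pos (hdet x hx),
          smul_eq_mul]
    _ = ∫ x in T '' Ω, helicity3 (fun p y => u y p) x :=
        (integral_image_eq_integral_abs_det_fderiv_smul volume hΩopen.measurableSet
          (fun x _ => (hTd x).hasFDerivAt.hasFDerivWithinAt) hTbij.injOn _).symm
    _ = ∫ x in Ω, helicity3 (fun p y => u y p) x := by rw [hTbij.image_eq]

/-- Let `Ω ⊆ ℝ³` be bounded open and `T : ℝ³ → ℝ³` a `C²` map restricting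
to a bijection of `Ω` onto itself with positive Jacobian determinant on `Ω`.  Let `u` be a
`C¹` vector field whose helicity density `Θ` is integrable on `Ω`.  With `û_j` the
components of the pull-back of the 1-form `Σ_p u^p dx^p` and `Θ̂` the helicity density of
`(û₁,û₂,û₃)`, we have `∫_Ω Θ̂ = ∫_Ω Θ`: total helicity is conserved. -/
theorem stmt8 (Ω : Set (Fin 3 → ℝ)) (hΩopen : IsOpen Ω)
    (hΩbdd : Bornology.IsBounded Ω)
    (T : (Fin 3 → ℝ) → (Fin 3 → ℝ)) (hT : ContDiff ℝ 2 T)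
    (hTbij : Set.BijOn T Ω Ω)
    (hdet : ∀ x ∈ Ω, 0 < (fderiv ℝ T x).det)
    (u : (Fin 3 → ℝ) → (Fin 3 → ℝ)) (hu : ContDiff ℝ 1 u)
    (hΘi : IntegrableOn (helicity3 (fun p y => u y p)) Ω)
    (uhat : Fin 3 → (Fin 3 → ℝ) → ℝ)
    (huhat : ∀ (j : Fin 3) (x : Fin 3 → ℝ),
      uhat j x = ∑ p : Fin 3, u (T x) p * pd3 j (fun y => T y p) x) :
    ∫ x in Ω, helicity3 uhat x = ∫ x in Ω, helicity3 (fun p y => u y p) x :=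
  stmt8_general Ω hΩopen T hT hTbij hdet u hu uhat huhat
end

section
/- Let f : ℝⁿ → ℝ be C¹ and let e : ℝⁿ → ℝⁿ be a C¹ vector field. Suppose δ > 0 and S : (−δ, δ) × ℝⁿ → ℝⁿ is a C¹ map such that S(0, x) = x and S(ε, x + ε·e(x)) = x for all |ε| < δ and x ∈ ℝⁿ (i.e. S(ε, ·) is a left inverse of the map x ↦ x + ε·e(x)). Define H(ε, x) = f(S(ε, x))·det(Iₙ + ε·De(S(ε, x))). Then for every x ∈ ℝⁿ, the function ε ↦ H(ε, x) is differentiable at ε = 0 with derivative ∂H/∂ε(0, x) = f(x)·div e(x) − e(x)·∇f(x). -/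
open MeasureTheory

/-- Partial derivative `∂_p f (x)` of a real-valued function on `ℝⁿ`. -/
noncomputable def pd (n : ℕ) (p : Fin n) (f : (Fin n → ℝ) → ℝ) (x : Fin n → ℝ) : ℝ :=
  fderiv ℝ f x (Pi.single p 1)

/-!
Differentiating `S (ε, x + ε • e x) = x` and `S (0, y) = y` at `(0, x)` shows that the curve
`ε ↦ S (ε, x)` leaves `x` with velocity `-e x`, which gives the advection term `-Df(x) (e x)`.
Since `De` is continuous, `ε ↦ id + ε • De (S (ε, x))` has derivative `De x` at `0`, and the
derivative of the determinant at the identity is the trace, which gives `div e`. The product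
rule combines the two.
-/

open Topology Asymptotics

theorem hasDerivAt_smul_of_continuousAt {𝕜 : Type*} [NontriviallyNormedField 𝕜]
    {F : Type*} [NormedAddCommGroup F] [NormedSpace 𝕜 F] {T : 𝕜 → F} (hT : ContinuousAt T 0) :
    HasDerivAt (fun t => t • T t) (T 0) 0 := by
  rw [hasDerivAt_iff_isLittleO_nhds_zero]
  have hsmall : (fun t => T t - T 0) =o[𝓝 0] fun _ => (1 : 𝕜) :=
    (isLittleO_one_iff 𝕜).2 (tendsto_sub_nhds_zero_iff.2 hT)
  simpa [smul_sub] using (isBigO_refl (fun t : 𝕜 => t) (𝓝 0)).smul_isLittleO hsmall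

namespace ContinuousLinearMap

variable {𝕜 : Type*} [NontriviallyNormedField 𝕜]
  {E : Type*} [NormedAddCommGroup E] [NormedSpace 𝕜 E] [FiniteDimensional 𝕜 E]

theorem contDiff_det [CompleteSpace 𝕜] {k : WithTop ℕ∞} :
    ContDiff 𝕜 k fun T : E →L[𝕜] E => T.det := by
  classical
  let b := Module.finBasis 𝕜 E
  have entry : ∀ i j, ContDiff 𝕜 k fun T : E →L[𝕜] E => LinearMap.toMatrix b b T i j := by
    intro i j
    simp only [LinearMap.toMatrix_apply]
    exact (LinearMap.toContinuousLinearMap (b.coord i) ∘L apply 𝕜 E (b j)).contDiff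
  simp_rw [det, ← LinearMap.det_toMatrix b, Matrix.det_apply']
  exact ContDiff.sum fun σ _ => contDiff_const.mul (contDiff_prod fun i _ => entry _ _)

theorem hasDerivAt_det_id_add_smul (T : E →L[𝕜] E) :
    HasDerivAt (fun t : 𝕜 => (ContinuousLinearMap.id 𝕜 E + t • T).det)
      (LinearMap.trace 𝕜 E T) 0 := by
  classical
  let b := Module.finBasis 𝕜 E
  set M := LinearMap.toMatrix b b T
  set Q := (Matrix.det (1 + (Polynomial.X : Polynomial 𝕜) • M.map Polynomial.C)).divX.divX
  have hpoly : ∀ t : 𝕜,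
      (ContinuousLinearMap.id 𝕜 E + t • T).det = 1 + M.trace * t + Q.eval t * t ^ 2 := by
    intro t
    rw [← Matrix.det_one_add_smul, det, ← LinearMap.det_toMatrix b]
    simp [M]
  rw [funext hpoly, LinearMap.trace_eq_matrix_trace 𝕜 b]
  have hlin := ((hasDerivAt_id (0 : 𝕜)).const_mul M.trace).const_add 1
  have hquad := (Q.hasDerivAt 0).fun_mul (hasDerivAt_pow 2 (0 : 𝕜))
  exact (hlin.fun_add hquad).congr_deriv (by simp [M])

theorem fderiv_det_id_apply [CompleteSpace 𝕜] (T : E →L[𝕜] E) :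
    fderiv 𝕜 (fun T : E →L[𝕜] E => T.det) (ContinuousLinearMap.id 𝕜 E) T =
      LinearMap.trace 𝕜 E T := by
  have hdet := ((contDiff_det (k := 1)).differentiable one_ne_zero
    (ContinuousLinearMap.id 𝕜 E)).hasFDerivAt
  have hline := (hasDerivAt_smul_of_continuousAt (T := fun _ : 𝕜 => T) continuousAt_const).const_add
    (ContinuousLinearMap.id 𝕜 E)
  exact (hdet.comp_hasDerivAt_of_eq 0 hline (by simp)).unique (hasDerivAt_det_id_add_smul T)

theorem hasDerivAt_det_id_add_smul_of_continuousAt [CompleteSpace 𝕜]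
    {T : 𝕜 → E →L[𝕜] E} (hT : ContinuousAt T 0) :
    HasDerivAt (fun t : 𝕜 => (ContinuousLinearMap.id 𝕜 E + t • T t).det)
      (LinearMap.trace 𝕜 E (T 0)) 0 := by
  have hdet := ((contDiff_det (k := 1)).differentiable one_ne_zero
    (ContinuousLinearMap.id 𝕜 E)).hasFDerivAt
  rw [← fderiv_det_id_apply]
  exact hdet.comp_hasDerivAt_of_eq 0 ((hasDerivAt_smul_of_continuousAt hT).const_add _) (by simp)

end ContinuousLinearMap

theorem hasDerivAt_slice_of_leftInverse {𝕜 : Type*} [NontriviallyNormedField 𝕜]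
    {E : Type*} [NormedAddCommGroup E] [NormedSpace 𝕜 E] {S : 𝕜 × E → E} {x v : E}
    (hS : DifferentiableAt 𝕜 S (0, x)) (hS0 : ∀ y, S (0, y) = y)
    (hinv : ∀ᶠ t in 𝓝 0, S (t, x + t • v) = x) :
    HasDerivAt (fun t => S (t, x)) (-v) 0 := by
  set L := fderiv 𝕜 S (0, x)
  have hline : ∀ w : 𝕜 × E, HasDerivAt (fun t : 𝕜 => S ((0, x) + t • w)) (L w) 0 := by
    intro w
    have hcurve : HasDerivAt (fun t : 𝕜 => ((0 : 𝕜), x) + t • w) w 0 := by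
      simpa using ((hasDerivAt_id (0 : 𝕜)).smul_const w).const_add ((0 : 𝕜), x)
    exact hS.hasFDerivAt.comp_hasDerivAt_of_eq 0 hcurve (by simp)
  have h_inv : L (1, v) = 0 := by
    refine (hline (1, v)).unique ((hasDerivAt_const 0 x).congr_of_eventuallyEq ?_)
    filter_upwards [hinv] with t ht
    simp only [Prod.smul_mk, Prod.mk_add_mk, zero_add, smul_eq_mul, mul_one]
    exact ht
  have h_zero : L (0, v) = v := by
    refine (hline (0, v)).unique ?_
    simpa [hS0] using ((hasDerivAt_id (0 : 𝕜)).smul_const v).const_add x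
  have h_dir : L (1, 0) = -v := by
    rw [show ((1 : 𝕜), (0 : E)) = (1, v) - (0, v) by simp, map_sub, h_inv, h_zero, zero_sub]
  simpa [h_dir] using hline (1, 0)

theorem fderiv_apply_eq_sum_pd {n : ℕ} (f : (Fin n → ℝ) → ℝ) (x v : Fin n → ℝ) :
    fderiv ℝ f x v = ∑ p, v p * pd n p f x := by
  conv_lhs => rw [← (Pi.basisFun ℝ (Fin n)).sum_repr v]
  simp [pd]

theorem trace_fderiv_eq_sum_pd {n : ℕ} {e : (Fin n → ℝ) → Fin n → ℝ} {x : Fin n → ℝ}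
    (he : DifferentiableAt ℝ e x) :
    LinearMap.trace ℝ (Fin n → ℝ) (fderiv ℝ e x) = ∑ p, pd n p (fun y => e y p) x := by
  rw [LinearMap.trace_eq_matrix_trace ℝ (Pi.basisFun ℝ (Fin n)), Matrix.trace]
  refine Finset.sum_congr rfl fun p _ => ?_
  simp [pd, fderiv_apply he, LinearMap.toMatrix'_apply]

/-- Let `f : ℝⁿ → ℝ` be `C¹` and `e : ℝⁿ → ℝⁿ` a `C¹` vector field.
Suppose `δ > 0` and `S : (−δ,δ) × ℝⁿ → ℝⁿ` is `C¹` with `S (0,x) = x` and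
`S (ε, x + ε•e x) = x` (a left inverse of `x ↦ x + ε·e x`).  For
`H (ε, x) = f (S (ε,x)) · det (Iₙ + ε•De (S (ε,x)))` (the coefficient of the push-forward of
the `n`-vector field `f ∂₁∧…∧∂ₙ`), the map `ε ↦ H (ε, x)` is differentiable at `ε = 0` with
derivative `f·div e − e·∇f` at `x`. -/
theorem stmt13 {n : ℕ} (f : (Fin n → ℝ) → ℝ) (hf : ContDiff ℝ 1 f)
    (e : (Fin n → ℝ) → (Fin n → ℝ)) (he : ContDiff ℝ 1 e)
    (δ : ℝ) (hδ : 0 < δ)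
    (S : ℝ × (Fin n → ℝ) → (Fin n → ℝ))
    (hS : ContDiffOn ℝ 1 S (Set.Ioo (-δ) δ ×ˢ Set.univ))
    (hS0 : ∀ x : Fin n → ℝ, S (0, x) = x)
    (hSinv : ∀ (ε : ℝ) (x : Fin n → ℝ), |ε| < δ → S (ε, x + ε • e x) = x)
    (H : ℝ → (Fin n → ℝ) → ℝ)
    (hH : ∀ (ε : ℝ) (x : Fin n → ℝ),
      H ε x = f (S (ε, x)) *
        (ContinuousLinearMap.id ℝ (Fin n → ℝ) + ε • fderiv ℝ e (S (ε, x))).det) :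
    ∀ x : Fin n → ℝ,
      HasDerivAt (fun ε => H ε x)
        (f x * (∑ p : Fin n, pd n p (fun y => e y p) x)
          - ∑ p : Fin n, e x p * pd n p f x) 0 := by
  intro x
  have hS_diff : DifferentiableAt ℝ S (0, x) :=
    (hS.differentiableOn one_ne_zero).differentiableAt
      ((isOpen_Ioo.prod isOpen_univ).mem_nhds ⟨⟨neg_lt_zero.2 hδ, hδ⟩, trivial⟩)
  have hinv : ∀ᶠ ε in 𝓝 (0 : ℝ), S (ε, x + ε • e x) = x := by
    filter_upwards [Metric.ball_mem_nhds (0 : ℝ) hδ] with ε hε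
    exact hSinv ε x (by simpa [Real.dist_eq] using hε)
  have hSx : HasDerivAt (fun ε => S (ε, x)) (-e x) 0 :=
    hasDerivAt_slice_of_leftInverse hS_diff hS0 hinv
  have hDe : ContinuousAt (fun ε => fderiv ℝ e (S (ε, x))) 0 :=
    (he.continuous_fderiv one_ne_zero).continuousAt.comp hSx.continuousAt
  have hprod :=
    ((hf.differentiable one_ne_zero x).hasFDerivAt.comp_hasDerivAt_of_eq 0 hSx (hS0 x).symm).mul
      (ContinuousLinearMap.hasDerivAt_det_id_add_smul_of_continuousAt hDe)
  have hdet_id : (ContinuousLinearMap.id ℝ (Fin n → ℝ)).det = 1 := LinearMap.det_id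
  rw [funext (hH · x)]
  refine hprod.congr_deriv ?_
  simp [hS0, hdet_id, fderiv_apply_eq_sum_pd,
    trace_fderiv_eq_sum_pd (he.differentiable one_ne_zero x)]
  ring
end
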